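/- arXiv:1503.05801 — 3 statements merged into one kernel-verified Lean document; each statement's English description precedes it below -/
import Mathlib

section
/- Let D and D' be positive integers such that D' = D·|α|² for some α ∈ O_K. Then Γ_{K,D} and Γ_{K,D'} are commensurable up to conjugacy in PSU_h(K): there exists γ ∈ PSU_h(K) such that γΓ_{K,D'}γ⁻¹ and Γ_{K,D} are commensurable. -/
open scoped ComplexConjugate Quaternion TensorProduct
open Matrix

noncomputable section

/-- The Hermitian form `h(z) = -z₀ conj z₂ - z₂ conj z₀ + z₁ conj z₁` (a real number). -/
def hform (z : Fin 3 → ℂ) : ℝ :=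
  (-(z 0 * conj (z 2)) - z 2 * conj (z 0) + z 1 * conj (z 1)).re

/-- The Hermitian product associated with `hform`. -/
def hprod (z w : Fin 3 → ℂ) : ℂ :=
  -(z 0 * conj (w 2)) - z 2 * conj (w 0) + z 1 * conj (w 1)

/-- The special unitary group of `hform`, as a set of matrices. -/
def SUhSet : Set (Matrix (Fin 3) (Fin 3) ℂ) :=
  {g | g.det = 1 ∧ ∀ z, hform (g.mulVec z) = hform z}

abbrev SL3C := Matrix.SpecialLinearGroup (Fin 3) ℂ

/-- The special unitary group of `hform`, as a subgroup of `SL₃(ℂ)`. -/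
def SUh : Subgroup SL3C where
  carrier := {g | ∀ z, hform ((g : Matrix (Fin 3) (Fin 3) ℂ).mulVec z) = hform z}
  one_mem' := by intro z; simp
  mul_mem' := by
    intro a b ha hb z
    rw [Matrix.SpecialLinearGroup.coe_mul, ← Matrix.mulVec_mulVec, ha, hb]
  inv_mem' := by
    intro a ha z
    have h1 := ha (((a⁻¹ : SL3C) : Matrix (Fin 3) (Fin 3) ℂ).mulVec z)
    rw [Matrix.mulVec_mulVec, ← Matrix.SpecialLinearGroup.coe_mul, mul_inv_cancel,
      Matrix.SpecialLinearGroup.coe_one, Matrix.one_mulVec] at h1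
    exact h1.symm

/-- The subgroup `𝕌₃·Id` of scalar matrices by cube roots of unity. -/
def U3 : Subgroup SUh where
  carrier := {g | ∃ ζ : ℂ, ζ ^ 3 = 1 ∧ ((g : SL3C) : Matrix (Fin 3) (Fin 3) ℂ) = ζ • 1}
  one_mem' := ⟨1, by norm_num, by simp⟩
  mul_mem' := by
    rintro a b ⟨ζ, h3, hg⟩ ⟨ξ, k3, hh⟩
    refine ⟨ζ * ξ, by rw [mul_pow, h3, k3, one_mul], ?_⟩
    push_cast [Subgroup.coe_mul, Matrix.SpecialLinearGroup.coe_mul]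
    rw [hg, hh, smul_mul_smul_comm, one_mul]
  inv_mem' := by
    rintro a ⟨ζ, h3, hg⟩
    have hζ : ζ ≠ 0 := by
      intro h; rw [h] at h3; norm_num at h3
    refine ⟨ζ⁻¹, by rw [inv_pow, h3, inv_one], ?_⟩
    have h1 : ((a : SL3C) : Matrix (Fin 3) (Fin 3) ℂ) *
        (((a⁻¹ : SUh) : SL3C) : Matrix (Fin 3) (Fin 3) ℂ) = 1 := by
      rw [← Matrix.SpecialLinearGroup.coe_mul, ← Subgroup.coe_mul, mul_inv_cancel,
        Subgroup.coe_one, Matrix.SpecialLinearGroup.coe_one]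
    rw [hg, Matrix.smul_mul, Matrix.one_mul] at h1
    calc (((a⁻¹ : SUh) : SL3C) : Matrix (Fin 3) (Fin 3) ℂ)
        = ζ⁻¹ • (ζ • (((a⁻¹ : SUh) : SL3C) : Matrix (Fin 3) (Fin 3) ℂ)) := by
          rw [smul_smul, inv_mul_cancel₀ hζ, one_smul]
      _ = ζ⁻¹ • (1 : Matrix (Fin 3) (Fin 3) ℂ) := by rw [h1]

instance U3_normal : U3.Normal := by
  constructor
  rintro n ⟨ζ, h3, hn⟩ g
  refine ⟨ζ, h3, ?_⟩
  push_cast [Subgroup.coe_mul, Matrix.SpecialLinearGroup.coe_mul]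
  rw [hn, Matrix.mul_smul, Matrix.mul_one, Matrix.smul_mul]
  simp [Matrix.mul_adjugate, Matrix.SpecialLinearGroup.det_coe]

/-- The projective special unitary group `PSU_h = SU_h/(𝕌₃·Id)`. -/
abbrev PSUhGrp := SUh ⧸ U3

/-- The topology on `SL₃(ℂ)` induced from `M₃(ℂ)`. -/
instance : TopologicalSpace SL3C :=
  TopologicalSpace.induced (fun g => (g : Matrix (Fin 3) (Fin 3) ℂ)) inferInstance

abbrev ProjC2 := Projectivization ℂ (Fin 3 → ℂ)

instance : TopologicalSpace ProjC2 :=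
  instTopologicalSpaceQuotient

lemma mulVecLin_inj (g : SL3C) :
    Function.Injective ((g : Matrix (Fin 3) (Fin 3) ℂ).mulVecLin) := by
  intro x y hxy
  have h := congrArg (fun v => ((g⁻¹ : SL3C) : Matrix (Fin 3) (Fin 3) ℂ).mulVec v) hxy
  simpa [Matrix.mulVecLin_apply, Matrix.mulVec_mulVec,
    Matrix.adjugate_mul, Matrix.SpecialLinearGroup.det_coe, Matrix.one_mulVec, one_smul] using h

/-- The action of an element of `SU_h` on the projective plane. -/
def pact (g : SUh) (p : ProjC2) : ProjC2 :=
  Projectivization.map (((g : SL3C) : Matrix (Fin 3) (Fin 3) ℂ).mulVecLin)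
    (mulVecLin_inj (g : SL3C)) p

lemma pact_mk (g : SUh) (v : Fin 3 → ℂ) (hv : v ≠ 0) :
    pact g (Projectivization.mk ℂ v hv) =
      Projectivization.mk ℂ (((g : SL3C) : Matrix (Fin 3) (Fin 3) ℂ).mulVec v)
        (by simpa [Matrix.mulVecLin_apply] using
          (map_zero (((g : SL3C) : Matrix (Fin 3) (Fin 3) ℂ).mulVecLin) ▸
            (mulVecLin_inj (g : SL3C)).ne hv)) := by
  exact Projectivization.map_mk _ _ v hv

lemma pact_one (p : ProjC2) : pact 1 p = p := by
  induction p using Projectivization.ind with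
  | h v hv => simp [pact_mk]

lemma pact_mul (g h : SUh) (p : ProjC2) : pact (g * h) p = pact g (pact h p) := by
  induction p using Projectivization.ind with
  | h v hv =>
      rw [pact_mk, pact_mk, pact_mk]
      congr 1
      push_cast [Subgroup.coe_mul, Matrix.SpecialLinearGroup.coe_mul]
      rw [Matrix.mulVec_mulVec]

lemma pact_u3 {u : SUh} (hu : u ∈ U3) (p : ProjC2) : pact u p = p := by
  obtain ⟨ζ, h3, hu⟩ := hu
  have hζ : ζ ≠ 0 := by intro h; rw [h] at h3; norm_num at h3
  induction p using Projectivization.ind with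
  | h v hv =>
      rw [pact_mk]
      rw [Projectivization.mk_eq_mk_iff]
      exact ⟨Units.mk0 ζ hζ, by simp [hu, Matrix.smul_mulVec]⟩

/-- The action of an element of `PSU_h` on the projective plane. -/
def pactQ (γ : PSUhGrp) (p : ProjC2) : ProjC2 :=
  Quotient.liftOn' γ (fun g => pact g p) (by
    intro a b hab
    have h : a⁻¹ * b ∈ U3 := QuotientGroup.leftRel_apply.mp hab
    have hb : b = a * (a⁻¹ * b) := by group
    show pact a p = pact b p
    rw [hb, pact_mul, pact_u3 h])

lemma pactQ_mk (g : SUh) (p : ProjC2) :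
    pactQ ((g : PSUhGrp)) p = pact g p := rfl

lemma pactQ_one (p : ProjC2) : pactQ 1 p = p := pact_one p

lemma pactQ_mul (γ δ : PSUhGrp) (p : ProjC2) :
    pactQ (γ * δ) p = pactQ γ (pactQ δ p) := by
  induction γ using Quotient.inductionOn' with
  | h g =>
      induction δ using Quotient.inductionOn' with
      | h d => exact pact_mul g d p

/-- The stabiliser in `PSU_h` of a point of the projective plane. -/
def stabPSU (p : ProjC2) : Subgroup PSUhGrp where
  carrier := {γ | pactQ γ p = p}
  one_mem' := pactQ_one p
  mul_mem' := by
    intro a b ha hb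
    show pactQ (a * b) p = p
    rw [pactQ_mul, hb, ha]
  inv_mem' := by
    intro a ha
    show pactQ a⁻¹ p = p
    conv_lhs => rw [← ha]
    rw [← pactQ_mul, inv_mul_cancel, pactQ_one]

lemma det_mem_subring {S : Subring ℂ} {M : Matrix (Fin 3) (Fin 3) ℂ}
    (h : ∀ i j, M i j ∈ S) : M.det ∈ S := by
  rw [Matrix.det_apply']
  exact sum_mem (fun σ _ =>
    S.mul_mem (intCast_mem S _) (prod_mem (fun i _ => h _ _)))

/-- The subgroup of `SU_h` of matrices with all entries in a given subring of `ℂ`. -/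
def SUhIn (S : Subring ℂ) : Subgroup SUh where
  carrier := {g | ∀ i j, (((g : SUh) : SL3C) : Matrix (Fin 3) (Fin 3) ℂ) i j ∈ S}
  one_mem' := by
    intro i j
    push_cast [Subgroup.coe_one, Matrix.SpecialLinearGroup.coe_one]
    rw [Matrix.one_apply]
    split
    · exact S.one_mem
    · exact S.zero_mem
  mul_mem' := by
    intro a b ha hb i j
    push_cast [Subgroup.coe_mul, Matrix.SpecialLinearGroup.coe_mul]
    rw [Matrix.mul_apply]
    exact sum_mem (fun k _ => S.mul_mem (ha i k) (hb k j))
  inv_mem' := by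
    intro a ha i j
    have hco : (((a⁻¹ : SUh) : SL3C) : Matrix (Fin 3) (Fin 3) ℂ) =
        Matrix.adjugate (((a : SUh) : SL3C) : Matrix (Fin 3) (Fin 3) ℂ) := by
      push_cast []
      exact Matrix.SpecialLinearGroup.coe_inv _
    rw [hco, Matrix.adjugate_apply]
    refine det_mem_subring (fun i' j' => ?_)
    rw [Matrix.updateRow_apply]
    split
    · rw [Pi.single_apply]
      split
      · exact S.one_mem
      · exact S.zero_mem
    · exact ha i' j'

/-- An imaginary quadratic number field, as an intermediate field of `ℂ/ℚ`. -/
def IsImagQuad (K : IntermediateField ℚ ℂ) : Prop :=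
  Module.finrank ℚ K = 2 ∧ ∃ z ∈ K, (z : ℂ).im ≠ 0

/-- The ring of integers of `K`, as a subring of `ℂ`. -/
def ringOfInt (K : IntermediateField ℚ ℂ) : Subring ℂ :=
  (integralClosure ℤ ℂ).toSubring ⊓ K.toSubalgebra.toSubring

/-- `DK` is the discriminant of the imaginary quadratic field `K`. -/
def IsDiscOf (K : IntermediateField ℚ ℂ) (DK : ℤ) : Prop :=
  ∃ ω : ℂ, (2 * ω - DK) ^ 2 = (DK : ℂ) ∧ ringOfInt K = Subring.closure {ω}

/-- The Picard modular group `Γ_K = PSU_h(O_K)`. -/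
def GammaK (K : IntermediateField ℚ ℂ) : Subgroup PSUhGrp :=
  Subgroup.map (QuotientGroup.mk' U3) (SUhIn (ringOfInt K))

/-- The group `PSU_h(K)` of elements of `PSU_h` with entries in `K`. -/
def PSUhRat (K : IntermediateField ℚ ℂ) : Subgroup PSUhGrp :=
  Subgroup.map (QuotientGroup.mk' U3) (SUhIn K.toSubalgebra.toSubring)

/-- A point of `ℙ²(ℂ)` is positive if `h` is positive on it. -/
def PosP (p : ProjC2) : Prop := 0 < hform p.rep

/-- A point of `ℙ²(ℂ)` is rational if it has homogeneous coordinates in `K`. -/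
def RationalP (K : IntermediateField ℚ ℂ) (p : ProjC2) : Prop :=
  ∃ (z : Fin 3 → ℂ) (hz : z ≠ 0), (∀ i, z i ∈ K) ∧ p = Projectivization.mk ℂ z hz

/-- A group is virtually cyclic if it has a cyclic subgroup of finite index. -/
def VirtCyclic (G : Type*) [Group G] : Prop :=
  ∃ H : Subgroup G, IsCyclic H ∧ H.FiniteIndex

/-- A subgroup of `PSU_h` is an extended ℂ-Fuchsian subgroup if it is discrete and fixes
a positive point of `ℙ²(ℂ)`. -/
def IsExtCFuchsian (Γ : Subgroup PSUhGrp) : Prop :=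
  DiscreteTopology Γ ∧ ∃ p : ProjC2, PosP p ∧ Γ ≤ stabPSU p

/-- A maximal nonelementary extended ℂ-Fuchsian subgroup of `Γ_K`. -/
def IsMaxFuchsian (K : IntermediateField ℚ ℂ) (Γ : Subgroup PSUhGrp) : Prop :=
  Γ ≤ GammaK K ∧ IsExtCFuchsian Γ ∧ ¬ VirtCyclic Γ ∧
    ∀ Γ' : Subgroup PSUhGrp, Γ' ≤ GammaK K → IsExtCFuchsian Γ' → ¬ VirtCyclic Γ' →
      Γ ≤ Γ' → Γ' = Γ

/-- The entries `z i` are relatively prime elements of `O_K`. -/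
def RelPrimeOK (K : IntermediateField ℚ ℂ) (z : Fin 3 → ℂ) : Prop :=
  ∀ d : ℂ, d ∈ ringOfInt K → (∀ i, ∃ c ∈ ringOfInt K, z i = d * c) →
    ∃ u ∈ ringOfInt K, d * u = 1

/-- The subgroup `Γ` has discriminant `D`: its fixed rational point, written with
relatively prime homogeneous coordinates in `O_K`, satisfies `h = D`. -/
def HasDisc (K : IntermediateField ℚ ℂ) (Γ : Subgroup PSUhGrp) (D : ℕ) : Prop :=
  ∃ (z : Fin 3 → ℂ) (hz : z ≠ 0), (∀ i, z i ∈ ringOfInt K) ∧ RelPrimeOK K z ∧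
    Γ ≤ stabPSU (Projectivization.mk ℂ z hz) ∧ hform z = D

/-- Two subgroups of `G` are commensurable up to conjugacy in `G`. -/
def CommensUpToConj {G : Type*} [Group G] (Γ Γ' : Subgroup G) : Prop :=
  ∃ g : G, Subgroup.Commensurable (Subgroup.map (MulAut.conj g).toMonoidHom Γ') Γ

/-- The point `[-D : 0 : 1]` of `ℙ²(ℂ)`. -/
def ptD (D : ℕ) : ProjC2 :=
  Projectivization.mk ℂ ![-(D : ℂ), 0, 1] (by
    intro h
    have := congrFun h 2
    simp at this)

/-- The stabiliser `Γ_{K,D}` of `[-D:0:1]` in `Γ_K`. -/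
def GammaKD (K : IntermediateField ℚ ℂ) (D : ℕ) : Subgroup PSUhGrp :=
  GammaK K ⊓ stabPSU (ptD D)

/-- The Poincaré hypersphere. -/
def HS : Set ProjC2 := {p | hform p.rep = 0}

/-- A chain: the intersection of a complex projective line with the hypersphere,
when nonempty and not a single point. -/
def IsChainSet (C : Set ProjC2) : Prop :=
  (∃ W : Submodule ℂ (Fin 3 → ℂ), Module.finrank ℂ W = 2 ∧
    C = {p : ProjC2 | p.rep ∈ W} ∩ HS) ∧ C.Nonempty ∧ ¬ ∃ x, C = {x}

/-- A chain is `K`-arithmetic if its stabiliser in `Γ_K` has a dense orbit in it. -/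
def IsKArithChain (K : IntermediateField ℚ ℂ) (C : Set ProjC2) : Prop :=
  IsChainSet C ∧ ∃ x ∈ C, ∀ y ∈ C,
    y ∈ closure {q : ProjC2 | ∃ γ ∈ GammaK K, pactQ γ '' C = C ∧ pactQ γ x = q}

/-- A quaternion over `ℚ` has integral coordinates. -/
def IntQuat {a b : ℚ} (x : ℍ[ℚ, a, b]) : Prop :=
  (∃ n : ℤ, x.re = n) ∧ (∃ n : ℤ, x.imI = n) ∧ (∃ n : ℤ, x.imJ = n) ∧ (∃ n : ℤ, x.imK = n)

/-- The reduced norm on the quaternion algebra `(a,b/ℚ)`. -/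
def qnorm (a b : ℚ) (x : ℍ[ℚ, a, b]) : ℚ :=
  x.re ^ 2 - a * x.imI ^ 2 - b * x.imJ ^ 2 + a * b * x.imK ^ 2

/-- A subgroup of `PSU_h` arises from the quaternion algebra `(a,b/ℚ)` if it is
commensurable with the image in `PSU_h` of `σ(A(ℤ)¹)` for some `ℚ`-algebra morphism
`σ : A → M₃(ℂ)` with `σ(A(ℤ)¹) ⊆ SU_h`. -/
def ArisesFrom (a b : ℤ) (Γ : Subgroup PSUhGrp) : Prop :=
  ∃ σ : ℍ[ℚ, (a : ℚ), (b : ℚ)] →ₐ[ℚ] Matrix (Fin 3) (Fin 3) ℂ,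
    (∀ x : ℍ[ℚ, (a : ℚ), (b : ℚ)], IntQuat x → qnorm a b x = 1 → σ x ∈ SUhSet) ∧
    Subgroup.Commensurable Γ (Subgroup.closure {γ : PSUhGrp | ∃ g : SUh,
      (∃ x : ℍ[ℚ, (a : ℚ), (b : ℚ)], IntQuat x ∧ qnorm a b x = 1 ∧
        ((g : SL3C) : Matrix (Fin 3) (Fin 3) ℂ) = σ x) ∧ γ = QuotientGroup.mk g})

/-- The explicit matrix realization `σ_{a,b}` of the quaternion algebra `(a,b/ℚ)`. -/
def sigmaMat (a b : ℤ) (x : ℍ[ℚ, (a : ℚ), (b : ℚ)]) : Matrix (Fin 3) (Fin 3) ℂ :=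
  !![(x.re : ℂ) + (x.imI : ℂ) * (Real.sqrt (a : ℝ) : ℂ), 0,
      ((x.imJ : ℂ) + (x.imK : ℂ) * (Real.sqrt (a : ℝ) : ℂ)) *
        (Complex.I * (Real.sqrt |(b : ℝ)| : ℂ));
     0, 1, 0;
     ((x.imJ : ℂ) - (x.imK : ℂ) * (Real.sqrt (a : ℝ) : ℂ)) *
        (Complex.I * (Real.sqrt |(b : ℝ)| : ℂ)), 0,
      (x.re : ℂ) - (x.imI : ℂ) * (Real.sqrt (a : ℝ) : ℂ)]

/-- The matrix `γ₀` conjugating the stabiliser of `[0:1:0]` to that of `[-2D:0:1]`. -/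
def gamma0 (D : ℕ) : Matrix (Fin 3) (Fin 3) ℂ :=
  (-(1 / Real.sqrt 2 : ℝ) : ℂ) •
    !![(Real.sqrt D : ℂ), (Real.sqrt (2 * D) : ℂ), (Real.sqrt D : ℂ);
       1, 0, -1;
       (1 / (2 * Real.sqrt D) : ℂ), -(1 / Real.sqrt (2 * D) : ℂ), (1 / (2 * Real.sqrt D) : ℂ)]

/-- `T` is a division algebra: every nonzero element is invertible. -/
def IsDivisionAlg (T : Type*) [Ring T] : Prop :=
  ∀ x : T, x ≠ 0 → IsUnit x

/-- The polar chain of a positive point `P`: the set of null points orthogonal to `P`. -/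
def polarChain (P : ProjC2) : Set ProjC2 :=
  {q | hprod q.rep P.rep = 0 ∧ hform q.rep = 0}

/-!
The diagonal matrix `γ = diag(α⁻¹, α / ᾱ, ᾱ)` lies in `SU_h(K)` and maps `[-D' : 0 : 1]`,
with `D' = D αᾱ`, to `[-D : 0 : 1]`; hence it conjugates the stabiliser of the first point onto
that of the second. Both `c γ` and `c γ⁻¹` have entries in `O_K` for `c = αᾱ`, so conjugation by
`γ` and by `γ⁻¹` maps the principal congruence subgroup of level `c²` of `SU_h(O_K)` into
`SU_h(O_K)`. As `O_K / (c²)` is finite, `γ Γ_K γ⁻¹` and `Γ_K` are commensurable, and intersecting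
with the stabiliser of `[-D : 0 : 1]` preserves commensurability.
-/

namespace Subgroup

variable {G G' : Type*} [Group G] [Group G']

theorem relIndex_map_map_ne_zero (f : G →* G') {H K : Subgroup G} (h : H.relIndex K ≠ 0) :
    (H.map f).relIndex (K.map f) ≠ 0 := fun h0 =>
  h (relIndex_eq_zero_of_le_left (le_comap_map f H) (by rwa [relIndex_comap]))

theorem Commensurable.map (f : G →* G') {H K : Subgroup G} (h : H.Commensurable K) :
    (H.map f).Commensurable (K.map f) :=
  ⟨relIndex_map_map_ne_zero f h.1, relIndex_map_map_ne_zero f h.2⟩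

theorem relIndex_inf_inf_ne_zero {H K : Subgroup G} (S : Subgroup G) (h : H.relIndex K ≠ 0) :
    (H ⊓ S).relIndex (K ⊓ S) ≠ 0 := by
  have hKS : H.relIndex (K ⊓ S) ≠ 0 := fun h0 => h (relIndex_eq_zero_of_le_right inf_le_left h0)
  rwa [← inf_relIndex_right, show H ⊓ S ⊓ (K ⊓ S) = H ⊓ (K ⊓ S) by
    rw [inf_assoc, ← inf_assoc S, inf_comm S K, inf_assoc, inf_idem], inf_relIndex_right]

theorem Commensurable.inf {H K : Subgroup G} (h : H.Commensurable K) (S : Subgroup G) :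
    (H ⊓ S).Commensurable (K ⊓ S) :=
  ⟨relIndex_inf_inf_ne_zero S h.1, relIndex_inf_inf_ne_zero S h.2⟩

theorem commensurable_of_le_of_le {A B H H' : Subgroup G} (hHA : H ≤ A) (hHB : H.relIndex B ≠ 0)
    (hH'B : H' ≤ B) (hH'A : H'.relIndex A ≠ 0) : A.Commensurable B :=
  ⟨fun h0 => hHB (relIndex_eq_zero_of_le_left hHA h0),
    fun h0 => hH'A (relIndex_eq_zero_of_le_left hH'B h0)⟩

theorem map_map_conj (f : G →* G') (g : G) (H : Subgroup G) :
    (H.map (MulAut.conj g).toMonoidHom).map f = (H.map f).map (MulAut.conj (f g)).toMonoidHom := by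
  rw [map_map, map_map]
  congr 1
  ext x
  simp

end Subgroup

section ImaginaryQuadratic

variable {K : IntermediateField ℚ ℂ}

theorem conj_mem_of_finrank_eq_two (hK : Module.finrank ℚ K = 2) {z : ℂ} (hz : z ∈ K) :
    conj z ∈ K := by
  have : Algebra.IsQuadraticExtension ℚ K := ⟨hK⟩
  set x : K := ⟨z, hz⟩
  have hroot : (minpoly ℚ x).aeval (conj z) = 0 := by
    rw [show conj z = (starRingEnd ℂ).toRatAlgHom (algebraMap K ℂ x) from rfl,
      Polynomial.aeval_algHom_apply, Polynomial.aeval_algebraMap_apply, minpoly.aeval]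
    simp
  -- `K/ℚ` is normal, so the root `conj z` of the minimal polynomial of `z` lies in `K`.
  obtain ⟨y, hy⟩ := (Normal.splits inferInstance x).mem_range_of_isRoot
    ((Polynomial.map_ne_zero_iff (algebraMap ℚ K).injective).mpr
      (minpoly.ne_zero (Algebra.IsIntegral.isIntegral x)))
    (i := algebraMap K ℂ) (x := conj z) (by
      rwa [Polynomial.map_map, ← IsScalarTower.algebraMap_eq, Polynomial.IsRoot,
        Polynomial.eval_map_algebraMap])
  exact hy ▸ y.2

theorem conj_mem_ringOfInt (hK : Module.finrank ℚ K = 2) {z : ℂ} (hz : z ∈ ringOfInt K) :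
    conj z ∈ ringOfInt K :=
  ⟨hz.1.map (starRingEnd ℂ).toIntAlgHom, conj_mem_of_finrank_eq_two hK hz.2⟩

theorem moduleFinite_ringOfInt (hK : Module.finrank ℚ K = 2) : Module.Finite ℤ (ringOfInt K) := by
  have : FiniteDimensional ℚ K := Module.finite_of_finrank_eq_succ hK
  have : NumberField K := ⟨⟩
  let f : NumberField.RingOfIntegers K →+* ℂ :=
    (algebraMap K ℂ).comp (algebraMap (NumberField.RingOfIntegers K) K)
  have hf : ∀ x, f x ∈ ringOfInt K := fun x =>
    ⟨(NumberField.RingOfIntegers.isIntegral_coe x).map (IsScalarTower.toAlgHom ℤ K ℂ),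
      SetLike.coe_mem _⟩
  have hsurj : Function.Surjective (f.codRestrict (ringOfInt K) hf) := by
    rintro ⟨z, hzint, hzK⟩
    have hy : IsIntegral ℤ (⟨z, hzK⟩ : K) := by
      rwa [← isIntegral_algebraMap_iff (algebraMap K ℂ).injective]
    exact ⟨⟨⟨z, hzK⟩, hy⟩, rfl⟩
  exact Module.Finite.of_surjective (f.codRestrict _ hf).toAddMonoidHom.toIntLinearMap hsurj

theorem finite_quotient_ringOfInt (hK : Module.finrank ℚ K = 2) {c : ringOfInt K} (hc : c ≠ 0) :
    Finite (ringOfInt K ⧸ Ideal.span {c}) :=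
  have := moduleFinite_ringOfInt hK
  Ideal.finiteQuotientOfFreeOfNeBot _ (by simpa using hc)

end ImaginaryQuadratic

abbrev matOf (u : SUh) : Matrix (Fin 3) (Fin 3) ℂ := ((u : SL3C) : Matrix (Fin 3) (Fin 3) ℂ)

section Congruence

variable (R : Subring ℂ)

theorem mem_SUhIn_iff {u : SUh} : u ∈ SUhIn R ↔ matOf u ∈ R.matrix := Iff.rfl

def SUhIn.toMatrix : SUhIn R →* Matrix (Fin 3) (Fin 3) R where
  toFun g := Matrix.of fun i j => ⟨matOf g i j, g.2 i j⟩
  map_one' := by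
    ext i j
    change (1 : Matrix (Fin 3) (Fin 3) ℂ) i j = _
    simp [Matrix.one_apply, apply_ite (Subtype.val : R → ℂ)]
  map_mul' g h := by
    ext i j
    change (matOf g * matOf h) i j = _
    simp [Matrix.mul_apply]

@[simp]
theorem SUhIn.coe_toMatrix_apply (x : SUhIn R) (i j : Fin 3) :
    (SUhIn.toMatrix R x i j : ℂ) = matOf x i j :=
  rfl

def SUhIn.reduction (c : R) : SUhIn R →* (Matrix (Fin 3) (Fin 3) (R ⧸ Ideal.span {c}))ˣ :=
  ((Ideal.Quotient.mk _).mapMatrix.toMonoidHom.comp (SUhIn.toMatrix R)).toHomUnits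

def congruenceSubgroup (c : R) : Subgroup SUh :=
  (SUhIn.reduction R c).ker.map (SUhIn R).subtype

theorem relIndex_congruenceSubgroup_ne_zero (c : R) [Finite (R ⧸ Ideal.span {c})] :
    (congruenceSubgroup R c).relIndex (SUhIn R) ≠ 0 := by
  rw [congruenceSubgroup, Subgroup.relIndex, Subgroup.subgroupOf,
    Subgroup.comap_map_eq_self_of_injective (SUhIn R).subtype_injective]
  have : Finite (Matrix (Fin 3) (Fin 3) (R ⧸ Ideal.span {c})) :=
    inferInstanceAs (Finite (Fin 3 → Fin 3 → _))
  exact Subgroup.FiniteIndex.index_ne_zero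

theorem exists_eq_one_add_smul_of_mem_congruenceSubgroup {c : R} {x : SUh}
    (hx : x ∈ congruenceSubgroup R c) : ∃ Y ∈ R.matrix, matOf x = 1 + (c : ℂ) • Y := by
  obtain ⟨x, hx, rfl⟩ := hx
  have hent : ∀ i j, ∃ r : R, matOf x i j = (1 : Matrix (Fin 3) (Fin 3) ℂ) i j + c * r := by
    intro i j
    have hij : Ideal.Quotient.mk (Ideal.span {c}) (SUhIn.toMatrix R x i j)
        = Ideal.Quotient.mk _ ((1 : Matrix (Fin 3) (Fin 3) R) i j) := by
      have := congr($(Units.ext_iff.mp (MonoidHom.mem_ker.mp hx)) i j)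
      rwa [Units.val_one, ← map_one (Ideal.Quotient.mk (Ideal.span {c})).mapMatrix] at this
    obtain ⟨r, hr⟩ := Ideal.mem_span_singleton'.mp (Ideal.Quotient.eq.mp hij)
    refine ⟨r, ?_⟩
    have := congrArg Subtype.val hr
    simp only [Subring.coe_mul, AddSubgroupClass.coe_sub, SUhIn.coe_toMatrix_apply,
      Matrix.one_apply, apply_ite (Subtype.val : R → ℂ), OneMemClass.coe_one,
      ZeroMemClass.coe_zero] at this
    rw [Matrix.one_apply]
    linear_combination -this
  choose r hr using hent
  exact ⟨Matrix.of fun i j => (r i j : ℂ), fun i j => (r i j).2, Matrix.ext hr⟩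

theorem conj_mem_SUhIn_of_mem_congruenceSubgroup {u x : SUh} {c : R}
    (hu : (c : ℂ) • matOf u ∈ R.matrix) (hu' : (c : ℂ) • matOf u⁻¹ ∈ R.matrix)
    (hx : x ∈ congruenceSubgroup R (c ^ 2)) : u * x * u⁻¹ ∈ SUhIn R := by
  obtain ⟨Y, hY, hxY⟩ := exists_eq_one_add_smul_of_mem_congruenceSubgroup R hx
  have hmat : matOf (u * x * u⁻¹) = 1 + ((c : ℂ) • matOf u) * Y * ((c : ℂ) • matOf u⁻¹) := by
    have huu : matOf u * matOf u⁻¹ = 1 := congrArg matOf (mul_inv_cancel u)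
    change matOf u * matOf x * matOf u⁻¹ = _
    rw [hxY, Matrix.mul_add, Matrix.add_mul, Matrix.mul_one, huu]
    simp only [Matrix.smul_mul, Matrix.mul_smul, smul_smul, Matrix.mul_assoc, sq,
      Subring.coe_mul]
  rw [mem_SUhIn_iff, hmat]
  exact add_mem (one_mem _) (mul_mem (mul_mem hu hY) hu')

theorem commensurable_map_conj_SUhIn (u : SUh) (c : R) [Finite (R ⧸ Ideal.span {c ^ 2})]
    (hu : (c : ℂ) • matOf u ∈ R.matrix) (hu' : (c : ℂ) • matOf u⁻¹ ∈ R.matrix) :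
    ((SUhIn R).map (MulAut.conj u).toMonoidHom).Commensurable (SUhIn R) := by
  refine Subgroup.commensurable_of_le_of_le (H := congruenceSubgroup R (c ^ 2))
    (H' := (congruenceSubgroup R (c ^ 2)).map (MulAut.conj u).toMonoidHom) (fun x hx => ?_)
    (relIndex_congruenceSubgroup_ne_zero R _) ?_ ?_
  · refine ⟨u⁻¹ * x * u⁻¹⁻¹,
      conj_mem_SUhIn_of_mem_congruenceSubgroup R hu' (by rwa [inv_inv]) hx, ?_⟩
    simp [mul_assoc]
  · rintro _ ⟨x, hx, rfl⟩
    exact conj_mem_SUhIn_of_mem_congruenceSubgroup R hu hu' hx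
  · rw [Subgroup.relIndex_map_map_of_injective _ _ (MulAut.conj u).injective]
    exact relIndex_congruenceSubgroup_ne_zero R _

end Congruence

section Diagonal

theorem hform_diagonal_mulVec {e : Fin 3 → ℂ} (h02 : e 0 * conj (e 2) = 1)
    (h1 : e 1 * conj (e 1) = 1) (z : Fin 3 → ℂ) :
    hform ((Matrix.diagonal e).mulVec z) = hform z := by
  have h20 : e 2 * conj (e 0) = 1 := by
    simpa [mul_comm] using congrArg conj h02
  simp only [hform, Matrix.mulVec_diagonal, map_mul]
  congr 1
  linear_combination (-(z 0 * conj (z 2))) * h02 + (-(z 2 * conj (z 0))) * h20 +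
    (z 1 * conj (z 1)) * h1

variable {α : ℂ}

def diagSUh (hα : α ≠ 0) : SUh :=
  ⟨⟨Matrix.diagonal ![α⁻¹, α / conj α, conj α], by
    have : conj α ≠ 0 := (map_ne_zero _).mpr hα
    simp only [Matrix.det_diagonal, Fin.prod_univ_three, Matrix.cons_val_zero,
      Matrix.cons_val_one, Matrix.cons_val]
    field_simp⟩,
    hform_diagonal_mulVec (by simp [hα]) (by
      have : conj α ≠ 0 := (map_ne_zero _).mpr hα
      simp only [Matrix.cons_val_one, Matrix.cons_val_zero, map_div₀, Complex.conj_conj]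
      field_simp)⟩

theorem matOf_diagSUh (hα : α ≠ 0) :
    matOf (diagSUh hα) = Matrix.diagonal ![α⁻¹, α / conj α, conj α] :=
  rfl

theorem diagSUh_inv (hα : α ≠ 0) : (diagSUh hα)⁻¹ = diagSUh (inv_ne_zero hα) := by
  refine inv_eq_of_mul_eq_one_right (Subtype.ext (Subtype.ext ?_))
  change matOf (diagSUh hα) * matOf (diagSUh (inv_ne_zero hα)) = 1
  have : conj α ≠ 0 := (map_ne_zero _).mpr hα
  rw [matOf_diagSUh, matOf_diagSUh, Matrix.diagonal_mul_diagonal, ← Matrix.diagonal_one]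
  congr 1
  ext i
  fin_cases i <;> simp [field]

theorem diagSUh_mem_SUhIn_field {K : IntermediateField ℚ ℂ} (hα : α ≠ 0) (hαK : α ∈ K)
    (hαK' : conj α ∈ K) : diagSUh hα ∈ SUhIn K.toSubalgebra.toSubring := by
  rw [mem_SUhIn_iff, matOf_diagSUh]
  refine (Matrix.diagonal_mem_matrix_iff (zero_mem _)).mpr fun i => ?_
  fin_cases i
  exacts [K.inv_mem hαK, K.div_mem hαK hαK', hαK']

theorem smul_matOf_diagSUh_mem {R : Subring ℂ} (hα : α ≠ 0) (hαR : α ∈ R) (hαR' : conj α ∈ R) :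
    (α * conj α) • matOf (diagSUh hα) ∈ R.matrix := by
  have : conj α ≠ 0 := (map_ne_zero _).mpr hα
  rw [matOf_diagSUh, ← Matrix.diagonal_smul]
  refine (Matrix.diagonal_mem_matrix_iff (zero_mem _)).mpr fun i => ?_
  change _ ∈ R
  fin_cases i
  · convert hαR' using 1
    simp [field]
  · convert R.mul_mem hαR hαR using 1
    simp [field]
  · exact R.mul_mem (R.mul_mem hαR hαR') hαR'

theorem smul_matOf_diagSUh_inv_mem {R : Subring ℂ} (hα : α ≠ 0) (hαR : α ∈ R)
    (hαR' : conj α ∈ R) : (α * conj α) • matOf (diagSUh hα)⁻¹ ∈ R.matrix := by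
  have : conj α ≠ 0 := (map_ne_zero _).mpr hα
  rw [diagSUh_inv, matOf_diagSUh, ← Matrix.diagonal_smul]
  refine (Matrix.diagonal_mem_matrix_iff (zero_mem _)).mpr fun i => ?_
  change _ ∈ R
  fin_cases i
  · convert R.mul_mem (R.mul_mem hαR hαR') hαR using 1
    simp
  · convert R.mul_mem hαR' hαR' using 1
    simp [field]
  · convert hαR using 1
    simp [field]

end Diagonal

instance : MulAction PSUhGrp ProjC2 where
  smul := pactQ
  one_smul := pactQ_one
  mul_smul := pactQ_mul

theorem stabPSU_eq_stabilizer (p : ProjC2) : stabPSU p = MulAction.stabilizer PSUhGrp p := rfl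

theorem diagSUh_smul_ptD {α : ℂ} (hα : α ≠ 0) {D D' : ℕ} (h : (D' : ℂ) = D * (α * conj α)) :
    (diagSUh hα : PSUhGrp) • ptD D' = ptD D := by
  have : conj α ≠ 0 := (map_ne_zero _).mpr hα
  change pact (diagSUh hα) (ptD D') = ptD D
  rw [ptD, ptD, pact_mk, Projectivization.mk_eq_mk_iff]
  refine ⟨Units.mk0 (conj α) this, ?_⟩
  ext i
  fin_cases i <;> simp [matOf_diagSUh, Matrix.mulVec_diagonal, h, field]

theorem stmt_8_general (K : IntermediateField ℚ ℂ) (hK : IsImagQuad K)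
    (D D' : ℕ) (hD' : 0 < D') (α : ℂ) (hα : α ∈ ringOfInt K)
    (h : (D' : ℝ) = (D : ℝ) * Complex.normSq α) :
    ∃ γ ∈ PSUhRat K,
      Subgroup.Commensurable (Subgroup.map (MulAut.conj γ).toMonoidHom (GammaKD K D'))
        (GammaKD K D) := by
  have hα0 : α ≠ 0 := by
    rintro rfl
    rw [map_zero, mul_zero, Nat.cast_eq_zero] at h
    omega
  have hα' := conj_mem_ringOfInt hK.1 hα
  let c : ringOfInt K := ⟨α * conj α, mul_mem hα hα'⟩
  have hc : (c : ℂ) ≠ 0 := mul_ne_zero hα0 ((map_ne_zero _).mpr hα0)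
  have : Finite (ringOfInt K ⧸ Ideal.span {c ^ 2}) :=
    finite_quotient_ringOfInt hK.1 (pow_ne_zero 2 fun h0 => hc (congrArg Subtype.val h0))
  have hDD' : (D' : ℂ) = D * (α * conj α) := by
    rw [Complex.mul_conj]
    exact_mod_cast congrArg ((↑) : ℝ → ℂ) h
  have hΓ := (commensurable_map_conj_SUhIn _ (diagSUh hα0) c (smul_matOf_diagSUh_mem hα0 hα hα')
    (smul_matOf_diagSUh_inv_mem hα0 hα hα')).map (QuotientGroup.mk' U3)
  rw [Subgroup.map_map_conj] at hΓ
  refine ⟨diagSUh hα0, Subgroup.mem_map_of_mem _ (diagSUh_mem_SUhIn_field hα0 hα.2 hα'.2), ?_⟩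
  rw [GammaKD, GammaKD, Subgroup.map_inf _ _ _ (MulAut.conj _).injective, stabPSU_eq_stabilizer,
    stabPSU_eq_stabilizer, ← MulAction.stabilizer_smul_eq_stabilizer_map_conj,
    diagSUh_smul_ptD hα0 hDD']
  exact hΓ.inf _

/-- If `D' = D·|α|²` for some `α ∈ O_K`, then `Γ_{K,D}` and `Γ_{K,D'}` are commensurable
up to conjugacy in `PSU_h(K)`. -/
theorem stmt_8 (K : IntermediateField ℚ ℂ) (hK : IsImagQuad K)
    (D D' : ℕ) (hD : 0 < D) (hD' : 0 < D') (α : ℂ) (hα : α ∈ ringOfInt K)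
    (h : (D' : ℝ) = (D : ℝ) * Complex.normSq α) :
    ∃ γ ∈ PSUhRat K,
      Subgroup.Commensurable (Subgroup.map (MulAut.conj γ).toMonoidHom (GammaKD K D'))
        (GammaKD K D) :=
  stmt_8_general K hK D D' hD' α hα h
end
end

section
/- For all integers a > 0 > b, with A = (a,b/ℚ), the set σ_{a,b}(A(ℤ)¹) is a discrete subgroup of SU_h (for the topology induced from M₃(ℂ)), and each of its elements fixes the point [0:1:0] ∈ ℙ²(ℂ). -/
open scoped ComplexConjugate Quaternion TensorProduct
open Matrix

noncomputable section

/-- The image of the norm-one integral quaternions under `σ_{a,b}`. -/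
def sigmaImage (a b : ℤ) : Set (Matrix (Fin 3) (Fin 3) ℂ) :=
  {M | ∃ x : ℍ[ℚ, (a : ℚ), (b : ℚ)], IntQuat x ∧ qnorm (a : ℚ) (b : ℚ) x = 1 ∧
    M = sigmaMat a b x}

/-!
`σ_{a,b}` is multiplicative, fixes `e₁`, and `σ_{a,b}(x)` has outer block `[[p, q i], [r i, s]]`
with `p, q, r, s` real and `ps + qr = n(x)`; such blocks with `ps + qr = 1` preserve `h`, and the
inverse of `σ_{a,b}(x)` is `σ_{a,b}(x̄)`. The four coordinates of `x` are real-linear functions of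
the entries of `σ_{a,b}(x)`, so `σ_{a,b}(A(ℤ)¹)` maps continuously and injectively into the lattice
`ℤ⁴`, hence is discrete.
-/

open Topology in
theorem discreteTopology_of_injOn_intValued {X ι : Type*} [TopologicalSpace X] [Finite ι]
    {S : Set X} {f : X → ι → ℝ} (hf : Continuous f) (hinj : S.InjOn f)
    (hint : ∀ x ∈ S, ∀ i, ∃ n : ℤ, f x i = n) : DiscreteTopology S := by
  choose g hg using hint
  let G : S → ι → ℤ := fun s ↦ g s s.2
  have hG : Pi.map (fun _ ↦ ((↑) : ℤ → ℝ)) ∘ G = f ∘ Subtype.val :=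
    funext fun s ↦ funext fun i ↦ (hg s s.2 i).symm
  refine DiscreteTopology.of_continuous_injective (f := G) ?_ fun s t hst ↦ ?_
  · rw [(IsEmbedding.piMap fun _ ↦ Int.isClosedEmbedding_coe_real.isEmbedding).continuous_iff, hG]
    fun_prop
  · refine Subtype.ext (hinj s.2 t.2 (funext fun i ↦ ?_))
    rw [hg s s.2 i, hg t t.2 i]
    exact congrArg _ (congrFun hst i)

open Complex in
theorem realImag_mem_SUhSet {p q r s : ℝ} (h : p * s + q * r = 1) :
    !![(p : ℂ), 0, q * I; 0, 1, 0; r * I, 0, s] ∈ SUhSet := by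
  have h' : (p : ℂ) * s + q * r = 1 := by exact_mod_cast h
  refine ⟨?_, fun z ↦ congrArg Complex.re ?_⟩
  · simp only [det_fin_three, of_apply, cons_val', cons_val_zero, cons_val_fin_one, cons_val_one,
      cons_val, mul_one, mul_zero, sub_zero, zero_mul, add_zero]
    linear_combination h' - q * r * I_sq
  · simp only [mulVec, dotProduct, of_apply, cons_val', cons_val_fin_one, cons_val_zero,
      Fin.sum_univ_three, cons_val_one, zero_mul, add_zero, cons_val, map_add, map_mul, conj_ofReal,
      conj_I, mul_neg, neg_mul, one_mul, zero_add, add_left_inj]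
    linear_combination (-(z 0 * conj (z 2) + z 2 * conj (z 0))) * h' +
      q * r * (z 0 * conj (z 2) + z 2 * conj (z 0)) * I_sq

open QuaternionAlgebra

section Quaternion

variable {a b : ℚ}

theorem qnorm_one : qnorm a b 1 = 1 := by
  simp [qnorm]

theorem qnorm_mul (x y : ℍ[ℚ, a, b]) : qnorm a b (x * y) = qnorm a b x * qnorm a b y := by
  simp only [qnorm, re_mul, imI_mul, imJ_mul, imK_mul]
  ring

theorem qnorm_star (x : ℍ[ℚ, a, b]) : qnorm a b (star x) = qnorm a b x := by
  simp [qnorm]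

theorem mul_star_eq_qnorm (x : ℍ[ℚ, a, b]) : x * star x = (qnorm a b x : ℍ[ℚ, a, b]) := by
  rw [mul_star_eq_coe]
  congr 1
  simp only [re_mul, re_star, imI_star, imJ_star, imK_star, qnorm]
  ring

theorem IntQuat.one : IntQuat (1 : ℍ[ℚ, a, b]) :=
  ⟨⟨1, by simp⟩, ⟨0, by simp⟩, ⟨0, by simp⟩, ⟨0, by simp⟩⟩

theorem IntQuat.star {x : ℍ[ℚ, a, b]} (hx : IntQuat x) : IntQuat (star x) := by
  obtain ⟨⟨n₁, h₁⟩, ⟨n₂, h₂⟩, ⟨n₃, h₃⟩, ⟨n₄, h₄⟩⟩ := hx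
  exact ⟨⟨n₁, by simp [h₁]⟩, ⟨-n₂, by simp [h₂]⟩, ⟨-n₃, by simp [h₃]⟩, ⟨-n₄, by simp [h₄]⟩⟩

end Quaternion

theorem IntQuat.mul {a b : ℤ} {x y : ℍ[ℚ, (a : ℚ), (b : ℚ)]} (hx : IntQuat x) (hy : IntQuat y) :
    IntQuat (x * y) := by
  obtain ⟨⟨n₁, h₁⟩, ⟨n₂, h₂⟩, ⟨n₃, h₃⟩, ⟨n₄, h₄⟩⟩ := hx
  obtain ⟨⟨m₁, g₁⟩, ⟨m₂, g₂⟩, ⟨m₃, g₃⟩, ⟨m₄, g₄⟩⟩ := hy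
  refine ⟨⟨n₁ * m₁ + a * n₂ * m₂ + b * n₃ * m₃ - a * b * n₄ * m₄, ?_⟩,
      ⟨n₁ * m₂ + n₂ * m₁ - b * n₃ * m₄ + b * n₄ * m₃, ?_⟩,
      ⟨n₁ * m₃ + a * n₂ * m₄ + n₃ * m₁ - a * n₄ * m₂, ?_⟩,
      ⟨n₁ * m₄ + n₂ * m₃ - n₃ * m₂ + n₄ * m₁, ?_⟩⟩ <;>
    simp only [re_mul, imI_mul, imJ_mul, imK_mul, h₁, h₂, h₃, h₄, g₁, g₂, g₃, g₄] <;>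
    push_cast <;> ring

def sigmaCoords (a b : ℤ) (M : Matrix (Fin 3) (Fin 3) ℂ) : Fin 4 → ℝ :=
  ![(M 0 0 + M 2 2).re / 2, (M 0 0 - M 2 2).re / (2 * √a),
    (M 0 2 + M 2 0).im / (2 * √|(b : ℝ)|), (M 0 2 - M 2 0).im / (2 * √a * √|(b : ℝ)|)]

theorem continuous_sigmaCoords (a b : ℤ) : Continuous (sigmaCoords a b) := by
  unfold sigmaCoords
  fun_prop

section Sigma

variable {a b : ℤ}

theorem ofReal_sqrt_sq_of_nonneg (ha : 0 ≤ a) : ((√(a : ℝ) : ℝ) : ℂ) ^ 2 = a := by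
  rw [← Complex.ofReal_pow, Real.sq_sqrt (by exact_mod_cast ha)]
  norm_cast

theorem I_mul_sqrt_abs_sq_of_nonpos (hb : b ≤ 0) :
    (Complex.I * ((√|(b : ℝ)| : ℝ) : ℂ)) ^ 2 = b := by
  rw [mul_pow, Complex.I_sq, ← Complex.ofReal_pow, Real.sq_sqrt (abs_nonneg _),
    abs_of_nonpos (by exact_mod_cast hb)]
  push_cast
  ring

theorem sigmaMat_one : sigmaMat a b 1 = 1 := by
  ext i j
  fin_cases i <;> fin_cases j <;> simp [sigmaMat]

theorem sigmaMat_mul (ha : 0 ≤ a) (hb : b ≤ 0) (x y : ℍ[ℚ, (a : ℚ), (b : ℚ)]) :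
    sigmaMat a b (x * y) = sigmaMat a b x * sigmaMat a b y := by
  have hA := ofReal_sqrt_sq_of_nonneg ha
  have hB := I_mul_sqrt_abs_sq_of_nonpos hb
  ext i j
  fin_cases i <;> fin_cases j <;>
    simp [sigmaMat, re_mul, imI_mul, imJ_mul, imK_mul] <;>
    simp only [← hA, ← hB] <;> ring

theorem sigmaMat_mulVec_e₁ (x : ℍ[ℚ, (a : ℚ), (b : ℚ)]) :
    sigmaMat a b x *ᵥ ![0, 1, 0] = ![0, 1, 0] := by
  ext i
  fin_cases i <;> simp [sigmaMat, mulVec, dotProduct, Fin.sum_univ_three]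

theorem sigmaMat_mem_SUhSet (ha : 0 ≤ a) (hb : b ≤ 0) {x : ℍ[ℚ, (a : ℚ), (b : ℚ)]}
    (hx : qnorm a b x = 1) : sigmaMat a b x ∈ SUhSet := by
  have hsa : √(a : ℝ) ^ 2 = a := Real.sq_sqrt (by exact_mod_cast ha)
  have hsb : √|(b : ℝ)| ^ 2 = -b := by
    rw [Real.sq_sqrt (abs_nonneg _), abs_of_nonpos (by exact_mod_cast hb)]
  have hx' : (x.re : ℝ) ^ 2 - a * x.imI ^ 2 - b * x.imJ ^ 2 + a * b * x.imK ^ 2 = 1 := by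
    rw [qnorm] at hx
    exact_mod_cast hx
  convert realImag_mem_SUhSet (p := x.re + x.imI * √a) (q := (x.imJ + x.imK * √a) * √|(b : ℝ)|)
    (r := (x.imJ - x.imK * √a) * √|(b : ℝ)|) (s := x.re - x.imI * √a) ?_ using 1
  · ext i j
    fin_cases i <;> fin_cases j <;> simp [sigmaMat] <;> ring
  · linear_combination hx' - x.imI ^ 2 * hsa + x.imJ ^ 2 * hsb -
      x.imK ^ 2 * (√(a : ℝ) ^ 2 * hsb - b * hsa)

theorem sigmaCoords_sigmaMat (ha : 0 < a) (hb : b < 0) (x : ℍ[ℚ, (a : ℚ), (b : ℚ)]) :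
    sigmaCoords a b (sigmaMat a b x) = ![(x.re : ℝ), x.imI, x.imJ, x.imK] := by
  have hsa : √(a : ℝ) ≠ 0 := (Real.sqrt_pos.2 (by exact_mod_cast ha)).ne'
  have hsb : √|(b : ℝ)| ≠ 0 := (Real.sqrt_pos.2 (abs_pos.2 (by exact_mod_cast hb.ne))).ne'
  ext i
  fin_cases i <;> simp [sigmaCoords, sigmaMat] <;> field_simp <;> ring

theorem discreteTopology_sigmaImage (ha : 0 < a) (hb : b < 0) :
    DiscreteTopology (sigmaImage a b) := by
  refine discreteTopology_of_injOn_intValued (continuous_sigmaCoords a b) ?_ ?_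
  · rintro _ ⟨x, -, -, rfl⟩ _ ⟨y, -, -, rfl⟩ h
    simp only [sigmaCoords_sigmaMat ha hb, vecCons_inj, Rat.cast_inj] at h
    obtain ⟨hre, hi, hj, hk, -⟩ := h
    rw [QuaternionAlgebra.ext hre hi hj hk]
  · rintro _ ⟨x, ⟨⟨n₁, h₁⟩, ⟨n₂, h₂⟩, ⟨n₃, h₃⟩, ⟨n₄, h₄⟩⟩, -, rfl⟩ i
    rw [sigmaCoords_sigmaMat ha hb]
    fin_cases i
    exacts [⟨n₁, by simp [h₁]⟩, ⟨n₂, by simp [h₂]⟩, ⟨n₃, by simp [h₃]⟩, ⟨n₄, by simp [h₄]⟩]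

end Sigma

/-- For integers `a > 0 > b`, the set `σ_{a,b}(A(ℤ)¹)` is a discrete subgroup of `SU_h`
(with the topology induced from `M₃(ℂ)`), and each of its elements fixes `[0:1:0]`. -/
theorem stmt_11 (a b : ℤ) (ha : 0 < a) (hb : b < 0) :
    sigmaImage a b ⊆ SUhSet ∧
    (1 : Matrix (Fin 3) (Fin 3) ℂ) ∈ sigmaImage a b ∧
    (∀ M ∈ sigmaImage a b, ∀ N ∈ sigmaImage a b, M * N ∈ sigmaImage a b) ∧
    (∀ M ∈ sigmaImage a b, ∃ N ∈ sigmaImage a b, M * N = 1 ∧ N * M = 1) ∧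
    DiscreteTopology (sigmaImage a b) ∧
    (∀ M ∈ sigmaImage a b, ∃ c : ℂ,
      M.mulVec ![0, 1, 0] = c • ![0, 1, 0]) := by
  have hσ := sigmaMat_mul ha.le hb.le
  refine ⟨?_, ⟨1, IntQuat.one, qnorm_one, sigmaMat_one.symm⟩, ?_, ?_,
    discreteTopology_sigmaImage ha hb, ?_⟩
  · rintro _ ⟨x, -, hx, rfl⟩
    exact sigmaMat_mem_SUhSet ha.le hb.le hx
  · rintro _ ⟨x, hxi, hx, rfl⟩ _ ⟨y, hyi, hy, rfl⟩
    exact ⟨x * y, hxi.mul hyi, by rw [qnorm_mul, hx, hy, one_mul], (hσ x y).symm⟩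
  · rintro _ ⟨x, hxi, hx, rfl⟩
    refine ⟨_, ⟨star x, hxi.star, by rwa [qnorm_star], rfl⟩, ?_, ?_⟩
    · rw [← hσ, mul_star_eq_qnorm, hx, coe_one, sigmaMat_one]
    · rw [← hσ, star_comm_self', mul_star_eq_qnorm, hx, coe_one, sigmaMat_one]
  · rintro _ ⟨x, -, -, rfl⟩
    exact ⟨1, by rw [sigmaMat_mulVec_e₁, one_smul]⟩
end
end

section
/- A matrix g ∈ SU_h fixes the point [0:1:0] ∈ ℙ²(ℂ) (i.e. g·(0,1,0) is a scalar multiple of (0,1,0)) if and only if there exist a, b, c, d ∈ ℝ and ζ ∈ ℂ with ad − bc = 1 and |ζ| = 1 such that g is the matrix with rows (ζa, 0, iζb), (0, ζ⁻², 0), (−iζc, 0, ζd). -/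
open scoped ComplexConjugate Quaternion TensorProduct
open Matrix

noncomputable section

/-! Fixing `[0:1:0]` makes the middle column of `g` a multiple `u • e₁`; since the columns
of `g` have the same `h`-Gram matrix as the standard basis, `|u| = 1` and the middle row
vanishes too. The outer `2 × 2` block `M` then preserves `-z₀ z̄₂ - z₂ z̄₀`, whose Gram matrix
`J` is an involution, so `M⁻¹ = J Mᴴ J`; entrywise this reads `conj x · δ = ± x` with
`δ = det M = u⁻¹`. Writing `δ = ζ²` with `|ζ| = 1`, it says that `ζ⁻¹ M` has real diagonal and
imaginary off-diagonal entries, giving `a, b, c, d`, and `ad - bc = 1` because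
`det M = ζ² (ad - bc)`. -/

lemma mulVec_e1_eq_smul_iff (g : Matrix (Fin 3) (Fin 3) ℂ) (c : ℂ) :
    g *ᵥ ![0, 1, 0] = c • ![0, 1, 0] ↔ g 0 1 = 0 ∧ g 1 1 = c ∧ g 2 1 = 0 := by
  simp [funext_iff, Fin.forall_fin_succ, mulVec, dotProduct, Fin.sum_univ_three]

lemma hprod_re (z w : Fin 3 → ℂ) :
    (hprod z w).re = (hform (z + w) - hform z - hform w) / 2 := by
  simp only [hprod, hform, Pi.add_apply, map_add, Complex.add_re, Complex.sub_re,
    Complex.neg_re, Complex.mul_re, Complex.add_im, Complex.conj_re, Complex.conj_im]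
  ring

lemma hprod_im (z w : Fin 3 → ℂ) :
    (hprod z w).im = (hform (z + Complex.I • w) - hform z - hform w) / 2 := by
  simp only [hprod, hform, Pi.add_apply, Pi.smul_apply, smul_eq_mul, map_add, _root_.map_mul,
    Complex.add_re, Complex.sub_re, Complex.neg_re, Complex.mul_re, Complex.add_im,
    Complex.sub_im, Complex.neg_im, Complex.mul_im, Complex.conj_re, Complex.conj_im,
    Complex.I_re, Complex.I_im]
  ring

section FormPreserving

variable {g : Matrix (Fin 3) (Fin 3) ℂ}

lemma hprod_mulVec (hg : ∀ z, hform (g *ᵥ z) = hform z) (z w : Fin 3 → ℂ) :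
    hprod (g *ᵥ z) (g *ᵥ w) = hprod z w := by
  apply Complex.ext
  · rw [hprod_re, hprod_re, ← mulVec_add, hg, hg, hg]
  · rw [hprod_im, hprod_im, ← mulVec_smul, ← mulVec_add, hg, hg, hg]

lemma hprod_col (hg : ∀ z, hform (g *ᵥ z) = hform z) (i j : Fin 3) :
    hprod (g.col i) (g.col j) = hprod (Pi.single i 1) (Pi.single j 1) := by
  simpa only [mulVec_single_one] using hprod_mulVec hg (Pi.single i 1) (Pi.single j 1)

lemma row_one_eq_zero_of_col_one (hg : ∀ z, hform (g *ᵥ z) = hform z) (h01 : g 0 1 = 0)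
    (h21 : g 2 1 = 0) :
    g 1 0 = 0 ∧ g 1 2 = 0 := by
  have h11 : g 1 1 * conj (g 1 1) = 1 := by simpa [hprod, h01, h21] using hprod_col hg 1 1
  have h11_ne : g 1 1 ≠ 0 := left_ne_zero_of_mul_eq_one h11
  exact ⟨by simpa [hprod, h01, h21, h11_ne] using hprod_col hg 1 0,
    by simpa [hprod, h01, h21, h11_ne] using hprod_col hg 1 2⟩

end FormPreserving

lemma block_relations_of_mem_SUhSet {p q r s u : ℂ}
    (hM : !![p, 0, q; 0, u, 0; r, 0, s] ∈ SUhSet) :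
    ‖u‖ = 1 ∧ u * (p * s - q * r) = 1 ∧ p * conj r + r * conj p = 0 ∧
      q * conj s + s * conj q = 0 ∧ p * conj s + r * conj q = 1 := by
  obtain ⟨hdet, hM⟩ := hM
  have hdet' : p * u * s - q * u * r = 1 := by simpa [det_fin_three] using hdet
  have h00 : -(p * conj r) - r * conj p = 0 := by simpa [hprod] using hprod_col hM 0 0
  have h11 : u * conj u = 1 := by simpa [hprod] using hprod_col hM 1 1
  have h22 : -(q * conj s) - s * conj q = 0 := by simpa [hprod] using hprod_col hM 2 2
  have h02 : -(p * conj s) - r * conj q = -1 := by simpa [hprod] using hprod_col hM 0 2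
  have hu : ‖u‖ ^ 2 = 1 := by exact_mod_cast (Complex.mul_conj' u).symm.trans h11
  refine ⟨(pow_eq_one_iff_of_nonneg (norm_nonneg u) two_ne_zero).1 hu, ?_, ?_, ?_, ?_⟩
  · linear_combination hdet'
  · linear_combination -h00
  · linear_combination -h22
  · linear_combination -h02

lemma exists_ofReal_of_conj_mul_sq {ζ x : ℂ} (hζ : ‖ζ‖ = 1) (hx : conj x * ζ ^ 2 = x) :
    ∃ a : ℝ, x = ζ * a := by
  have hζζ : conj ζ * ζ = 1 := by rw [Complex.conj_mul', hζ]; norm_num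
  obtain ⟨a, ha⟩ := Complex.conj_eq_iff_real.1
    (show conj (conj ζ * x) = conj ζ * x by
      rw [map_mul, Complex.conj_conj]; linear_combination conj ζ * hx - ζ * conj x * hζζ)
  exact ⟨a, by rw [← ha]; linear_combination -x * hζζ⟩

lemma exists_I_mul_ofReal_of_conj_mul_sq {ζ x : ℂ} (hζ : ‖ζ‖ = 1)
    (hx : conj x * ζ ^ 2 = -x) :
    ∃ b : ℝ, x = Complex.I * ζ * b := by
  obtain ⟨b, hb⟩ := exists_ofReal_of_conj_mul_sq (x := -Complex.I * x) hζ
    (by rw [map_mul, map_neg, Complex.conj_I]; linear_combination Complex.I * hx)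
  exact ⟨b, by linear_combination Complex.I * hb + x * Complex.I_sq⟩

lemma exists_real_form_of_gram {p q r s : ℂ} (h1 : p * conj r + r * conj p = 0)
    (h2 : q * conj s + s * conj q = 0) (h3 : p * conj s + r * conj q = 1)
    (hδ : ‖p * s - q * r‖ = 1) :
    ∃ (a b c d : ℝ) (ζ : ℂ), a * d - b * c = 1 ∧ ‖ζ‖ = 1 ∧ ζ ^ 2 = p * s - q * r ∧
      p = ζ * a ∧ q = Complex.I * ζ * b ∧ r = -(Complex.I * ζ * c) ∧ s = ζ * d := by
  have h3' : conj p * s + conj r * q = 1 := by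
    simpa [mul_comm] using congrArg conj h3
  have hp : conj p * (p * s - q * r) = p := by linear_combination p * h3' - q * h1
  have hq : conj q * (p * s - q * r) = -q := by linear_combination p * h2 - q * h3
  have hr : conj r * (p * s - q * r) = -r := by linear_combination s * h1 - r * h3'
  have hs : conj s * (p * s - q * r) = s := by linear_combination s * h3 - r * h2
  obtain ⟨ζ, hζ2⟩ := IsAlgClosed.exists_pow_nat_eq (p * s - q * r) two_pos
  rw [← hζ2] at hp hq hr hs
  have hζ : ‖ζ‖ = 1 := by
    rw [← pow_eq_one_iff_of_nonneg (norm_nonneg ζ) two_ne_zero, ← norm_pow, hζ2, hδ]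
  obtain ⟨a, rfl⟩ := exists_ofReal_of_conj_mul_sq hζ hp
  obtain ⟨b, rfl⟩ := exists_I_mul_ofReal_of_conj_mul_sq hζ hq
  obtain ⟨c, rfl⟩ := exists_I_mul_ofReal_of_conj_mul_sq hζ hr
  obtain ⟨d, rfl⟩ := exists_ofReal_of_conj_mul_sq hζ hs
  have hζ0 : ζ ^ 2 ≠ 0 := pow_ne_zero 2 (norm_ne_zero_iff.1 (hζ.trans_ne one_ne_zero))
  have had : ((a * d - b * (-c) : ℝ) : ℂ) = 1 := by
    refine mul_left_cancel₀ hζ0 ?_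
    push_cast
    linear_combination -hζ2 + ζ ^ 2 * b * c * Complex.I_sq
  refine ⟨a, b, -c, d, ζ, by exact_mod_cast had, hζ, hζ2, rfl, rfl, by push_cast; ring, rfl⟩

/-- A matrix `g ∈ SU_h` fixes `[0:1:0]` if and only if it has the explicit form
with rows `(ζa, 0, iζb)`, `(0, ζ⁻², 0)`, `(−iζc, 0, ζd)` where `a,b,c,d ∈ ℝ`,
`ad − bc = 1` and `|ζ| = 1`. -/
theorem stmt_12 (g : Matrix (Fin 3) (Fin 3) ℂ) (hg : g ∈ SUhSet) :
    (∃ c : ℂ, g.mulVec ![0, 1, 0] = c • ![0, 1, 0]) ↔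
    ∃ (a b c d : ℝ) (ζ : ℂ), a * d - b * c = 1 ∧ ‖ζ‖ = 1 ∧
      g = !![ζ * (a : ℂ), 0, Complex.I * ζ * (b : ℂ);
             0, (ζ ^ 2)⁻¹, 0;
             -(Complex.I * ζ * (c : ℂ)), 0, ζ * (d : ℂ)] := by
  constructor
  · rintro ⟨u, hu⟩
    obtain ⟨h01, h11, h21⟩ := (mulVec_e1_eq_smul_iff g u).1 hu
    obtain ⟨h10, h12⟩ := row_one_eq_zero_of_col_one hg.2 h01 h21
    have hblock : g = !![g 0 0, 0, g 0 2; 0, u, 0; g 2 0, 0, g 2 2] := by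
      conv_lhs => rw [eta_fin_three g]
      rw [h01, h10, h11, h12, h21]
    rw [hblock] at hg
    obtain ⟨hu1, huδ, h1, h2, h3⟩ := block_relations_of_mem_SUhSet hg
    have hδ : ‖g 0 0 * g 2 2 - g 0 2 * g 2 0‖ = 1 := by
      simpa [hu1] using congrArg norm huδ
    obtain ⟨a, b, c, d, ζ, had, hζ, hζ2, hp, hq, hr, hs⟩ :=
      exists_real_form_of_gram h1 h2 h3 hδ
    refine ⟨a, b, c, d, ζ, had, hζ, ?_⟩
    rw [hblock, hp, hq, hr, hs, hζ2, ← eq_inv_of_mul_eq_one_left huδ]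
  · rintro ⟨a, b, c, d, ζ, -, -, rfl⟩
    exact ⟨(ζ ^ 2)⁻¹, (mulVec_e1_eq_smul_iff _ _).2 (by simp)⟩
end
end
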